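/- arXiv:2207.04413 — 2 statements merged into one kernel-verified Lean document; each statement's English description precedes it below -/
import Mathlib

section
/- Let σ_x ≠ σ_y both positive, q_0 a non-degenerate normalized BC(S) for n bodies with masses m, and q_{0,n+1} a non-degenerate critical point of V_{Sn}(m, q_0, ·) (i.e. the 2×2 Hessian D²_{q_{n+1}} V_{Sn}(m, q_0, q_{0,n+1}) is invertible). Then there exists an open neighborhood U of 0 in ℝ and a continuous (indeed real analytic) map g : U → ℝ^{2n} × ℝ² with g(0) = (q_0, q_{0,n+1}) such that f_i^{(n+1)}(m, m_{n+1}, g(m_{n+1})) = 0 for all i = 1,...,n+1 and all m_{n+1} ∈ U, with λ = U_n(m, q_0) held fixed. In other words, the configuration (q_0, q_{0,n+1}) with zero (n+1)-th mass can be analytically continued to relative equilibrium configurations of the (n+1)-body problem for all sufficiently small m_{n+1}. -/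
open scoped BigOperators RealInnerProductSpace
open Matrix Filter

noncomputable section

/-- The plane. -/
abbrev E2 : Type := EuclideanSpace ℝ (Fin 2)

/-- Action of a `2×2` matrix on a vector of the plane. -/
noncomputable def mvec (S : Matrix (Fin 2) (Fin 2) ℝ) (x : E2) : E2 :=
  (EuclideanSpace.equiv (Fin 2) ℝ).symm (S.mulVec (EuclideanSpace.equiv (Fin 2) ℝ x))

/-- The Newtonian force function `U_n`. -/
noncomputable def newtU {n : ℕ} (m : Fin n → ℝ) (q : Fin n → E2) : ℝ :=
  ∑ i : Fin n, ∑ j : Fin n, if i < j then m i * m j / ‖q j - q i‖ else 0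

/-- The gradient `∇_i U_n`. -/
noncomputable def gradU {n : ℕ} (m : Fin n → ℝ) (q : Fin n → E2) (i : Fin n) : E2 :=
  ∑ j ∈ Finset.univ.erase i, (m i * m j / ‖q j - q i‖ ^ 3) • (q j - q i)

/-- The center of mass. -/
noncomputable def com {n : ℕ} (m : Fin n → ℝ) (q : Fin n → E2) : E2 :=
  (∑ i, m i)⁻¹ • ∑ i, m i • q i

/-- Collision-free configurations, i.e. `q ∈ ℝ^{2n} \ Δ`. -/
def CollisionFree {n : ℕ} (q : Fin n → E2) : Prop := ∀ i j, i ≠ j → q i ≠ q j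

/-- Balanced configuration with respect to `S`, with parameter `lam`. -/
def IsBC {n : ℕ} (m : Fin n → ℝ) (q : Fin n → E2)
    (S : Matrix (Fin 2) (Fin 2) ℝ) (lam : ℝ) : Prop :=
  ∀ i, gradU m q i + (m i * lam) • mvec S (q i - com m q) = 0

/-- The `S`-weighted moment of inertia `I_S`. -/
noncomputable def momI {n : ℕ} (m : Fin n → ℝ) (q : Fin n → E2)
    (S : Matrix (Fin 2) (Fin 2) ℝ) : ℝ :=
  ∑ j, m j * ⟪q j - com m q, mvec S (q j - com m q)⟫

/-- The diagonal matrix `diag(σx, σy)`. -/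
def Sdiag (sx sy : ℝ) : Matrix (Fin 2) (Fin 2) ℝ := !![sx, 0; 0, sy]

/-- Relative equilibrium map `f_i^{(n)}(m,q)` for normalized configurations. -/
noncomputable def relEq {n : ℕ} (m : Fin n → ℝ) (q : Fin n → E2)
    (S : Matrix (Fin 2) (Fin 2) ℝ) (i : Fin n) : E2 :=
  (∑ j ∈ Finset.univ.erase i, (m j / ‖q j - q i‖ ^ 3) • (q j - q i)) + newtU m q • mvec S (q i)

/-- The `n`-body relative equilibrium map with the multiplier `lam` held fixed. -/
noncomputable def nBodyMap {n : ℕ} (m : Fin n → ℝ) (S : Matrix (Fin 2) (Fin 2) ℝ) (lam : ℝ)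
    (q : Fin n → E2) (i : Fin n) : E2 :=
  (∑ j ∈ Finset.univ.erase i, (m j / ‖q j - q i‖ ^ 3) • (q j - q i)) + lam • mvec S (q i)

/-- The gradient `∇_ξ V_{Sn}` of the restricted potential, with coefficient `lam`. -/
noncomputable def gradV {n : ℕ} (m : Fin n → ℝ) (S : Matrix (Fin 2) (Fin 2) ℝ) (lam : ℝ)
    (q : Fin n → E2) (ξ : E2) : E2 :=
  (∑ j, (m j / ‖q j - ξ‖ ^ 3) • (q j - ξ)) + lam • mvec S ξ

/-- The restricted potential `V_{Sn}(m, q, ξ)`. -/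
noncomputable def Vres {n : ℕ} (m : Fin n → ℝ) (q : Fin n → E2)
    (S : Matrix (Fin 2) (Fin 2) ℝ) (ξ : E2) : ℝ :=
  (∑ j, m j / ‖q j - ξ‖) + (1 / 2) * newtU m q * ⟪ξ, mvec S ξ⟫

/-- The combined `(n+1)`-body map `(f_1^{(n+1)},…,f_{n+1}^{(n+1)})` with `lam` fixed
and `ε` the small `(n+1)`-th mass. -/
noncomputable def fullMap {n : ℕ} (m : Fin n → ℝ) (S : Matrix (Fin 2) (Fin 2) ℝ) (lam : ℝ)
    (ε : ℝ) (q : Fin n → E2) (ξ : E2) : (Fin n → E2) × E2 :=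
  (fun i => (ε / ‖ξ - q i‖ ^ 3) • (ξ - q i) + nBodyMap m S lam q i, gradV m S lam q ξ)

/-- Map whose derivative at `q̃` is the Hessian-type matrix `H(q̃) = D²U_n(q̃) + λ Ŝ M`
(central-configuration case `S = σ I`). -/
noncomputable def hessMap {n : ℕ} (m : Fin n → ℝ) (sg lam : ℝ) (q : Fin n → E2)
    (i : Fin n) : E2 :=
  gradU m q i + (lam * sg * m i) • q i

/-- Rotation by `π/2` in the plane. -/
noncomputable def rotJ (x : E2) : E2 := mvec !![(0 : ℝ), -1; 1, 0] x

/-!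
Take the `(n+1)`-th mass `ε` as a parameter. At `ε = 0` the first `n` equations do not involve
`ξ`, so the derivative of `(q, ξ) ↦ fullMap ε q ξ` at `(q0, q01)` is block lower-triangular with
diagonal blocks `A` and `B`, hence invertible, and the implicit function theorem continues the
zero `(q0, q01)` to all small `ε`.
-/

section ImplicitFunction

variable {𝕜 : Type*} [NontriviallyNormedField 𝕜]
  {E₁ : Type*} [NormedAddCommGroup E₁] [NormedSpace 𝕜 E₁] [CompleteSpace E₁]
  {E₂ : Type*} [NormedAddCommGroup E₂] [NormedSpace 𝕜 E₂] [CompleteSpace E₂]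
  {F : Type*} [NormedAddCommGroup F] [NormedSpace 𝕜 F] [CompleteSpace F]

/-- Unlike `tendsto_implicitFunctionOfProdDomain`, this gives continuity on a neighbourhood: the
branch is read off the local inverse of `v ↦ (f v, v.1)`, continuous on its open target. -/
theorem HasStrictFDerivAt.exists_continuousOn_apply_eq {f : E₁ × E₂ → F} {f' : E₁ × E₂ →L[𝕜] F}
    {u : E₁ × E₂} (hf : HasStrictFDerivAt f f' u) (hf₂ : (f' ∘L .inr 𝕜 E₁ E₂).IsInvertible) :
    ∃ U : Set E₁, IsOpen U ∧ u.1 ∈ U ∧ ∃ ψ : E₁ → E₂, ContinuousOn ψ U ∧ ψ u.1 = u.2 ∧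
      ∀ x ∈ U, f (x, ψ x) = f u := by
  set H := (hf.implicitFunctionDataOfProdDomain hf₂).toOpenPartialHomeomorph
  have hH : ∀ v, H v = (f v, v.1) := fun _ => rfl
  have hsrc : u ∈ H.source :=
    (hf.implicitFunctionDataOfProdDomain hf₂).pt_mem_toOpenPartialHomeomorph_source
  have hsection : Continuous fun x : E₁ => (f u, x) := continuous_const.prodMk continuous_id
  refine ⟨(fun x => (f u, x)) ⁻¹' H.target, H.open_target.preimage hsection,
    by simpa [hH] using H.map_source hsrc, fun x => (H.symm (f u, x)).2,
    continuous_snd.comp_continuousOn (H.continuousOn_symm.comp hsection.continuousOn fun _ h => h),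
    by simpa [← hH] using congrArg Prod.snd (H.left_inv hsrc), fun x hx => ?_⟩
  have hinv := H.right_inv hx
  rw [hH, Prod.mk.injEq] at hinv
  rw [show (x, (H.symm (f u, x)).2) = H.symm (f u, x) from Prod.ext hinv.2.symm rfl]
  exact hinv.1

end ImplicitFunction

theorem LinearMap.bijective_prod_comp_fst {R M N P Q : Type*} [Ring R]
    [AddCommGroup M] [AddCommGroup N] [AddCommGroup P] [AddCommGroup Q]
    [Module R M] [Module R N] [Module R P] [Module R Q]
    {A : M →ₗ[R] P} {G : M × N →ₗ[R] Q} (hA : Function.Bijective A)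
    (hG : Function.Bijective (G ∘ₗ LinearMap.inr R M N)) :
    Function.Bijective ((A ∘ₗ LinearMap.fst R M N).prod G) := by
  have hsplit : ∀ u v, G (u, v) = G (u, 0) + G (0, v) := fun u v => by
    rw [← map_add, Prod.mk_add_mk, add_zero, zero_add]
  constructor
  · refine (injective_iff_map_eq_zero _).mpr fun ⟨u, v⟩ h => ?_
    simp only [LinearMap.prod_apply, Function.prod_apply, LinearMap.comp_apply, LinearMap.fst_apply,
      Prod.mk_eq_zero] at h
    obtain rfl : u = 0 := (injective_iff_map_eq_zero A).mp hA.1 u h.1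
    obtain rfl : v = 0 := (injective_iff_map_eq_zero _).mp hG.1 v h.2
    rfl
  · rintro ⟨p, r⟩
    obtain ⟨u, rfl⟩ := hA.2 p
    obtain ⟨v, hv⟩ := hG.2 (r - G (u, 0))
    refine ⟨(u, v), ?_⟩
    simp only [LinearMap.coe_comp, Function.comp_apply, LinearMap.coe_inr] at hv
    simp [hsplit u v, hv]

theorem ContinuousLinearMap.isInvertible_of_bijective {𝕜 E F : Type*} [NontriviallyNormedField 𝕜]
    [CompleteSpace 𝕜] [NormedAddCommGroup E] [NormedSpace 𝕜 E] [FiniteDimensional 𝕜 E]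
    [NormedAddCommGroup F] [NormedSpace 𝕜 F] [FiniteDimensional 𝕜 F]
    {f : E →L[𝕜] F} (hf : Function.Bijective f) : f.IsInvertible :=
  ⟨(LinearEquiv.ofBijective f.toLinearMap hf).toContinuousLinearEquiv, rfl⟩

theorem ContDiffAt.div_norm_pow_three_smul {E F : Type*} [NormedAddCommGroup E]
    [InnerProductSpace ℝ E] [NormedAddCommGroup F] [NormedSpace ℝ F] {k : WithTop ℕ∞}
    {f : F → ℝ} {g : F → E} {x : F} (hf : ContDiffAt ℝ k f x) (hg : ContDiffAt ℝ k g x)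
    (hx : g x ≠ 0) : ContDiffAt ℝ k (fun p => (f p / ‖g p‖ ^ 3) • g p) x :=
  (hf.div ((hg.norm ℝ hx).pow 3) (by positivity)).smul hg

theorem contDiff_mvec (S : Matrix (Fin 2) (Fin 2) ℝ) {k : WithTop ℕ∞} : ContDiff ℝ k (mvec S) :=
  (EuclideanSpace.equiv (Fin 2) ℝ).symm.contDiff.comp
    (S.mulVecLin.toContinuousLinearMap.contDiff.comp (EuclideanSpace.equiv (Fin 2) ℝ).contDiff)

section NBody

variable {n : ℕ} (m : Fin n → ℝ) (S : Matrix (Fin 2) (Fin 2) ℝ) (lam : ℝ) {k : WithTop ℕ∞}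

theorem contDiffAt_nBodyMap {q0 : Fin n → E2} (hq0 : CollisionFree q0) :
    ContDiffAt ℝ k (nBodyMap m S lam) q0 := by
  have hproj : ∀ j, ContDiff ℝ k fun q : Fin n → E2 => q j := fun j => contDiff_apply ℝ E2 j
  refine contDiffAt_pi.mpr fun i => ?_
  unfold nBodyMap
  refine ContDiffAt.add (ContDiffAt.sum fun j hj => ?_) ?_
  · exact (contDiffAt_const (c := m j)).div_norm_pow_three_smul
      ((hproj j).sub (hproj i)).contDiffAt
      (sub_ne_zero.mpr (hq0 j i (Finset.ne_of_mem_erase hj)))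
  · exact (contDiffAt_const (c := lam)).smul ((contDiff_mvec S).comp (hproj i)).contDiffAt

theorem contDiffAt_gradV {q0 : Fin n → E2} {ξ0 : E2} (hsep : ∀ i, ξ0 ≠ q0 i) :
    ContDiffAt ℝ k (fun p : (Fin n → E2) × E2 => gradV m S lam p.1 p.2) (q0, ξ0) := by
  unfold gradV
  refine ContDiffAt.add (ContDiffAt.sum fun j _ => ?_) ?_
  · exact (contDiffAt_const (c := m j)).div_norm_pow_three_smul
      (((contDiff_apply ℝ E2 j).comp contDiff_fst).sub contDiff_snd).contDiffAt
      (sub_ne_zero.mpr (hsep j).symm)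
  · exact (contDiffAt_const (c := lam)).smul ((contDiff_mvec S).comp contDiff_snd).contDiffAt

theorem contDiffAt_fullMap {ε : ℝ} {q0 : Fin n → E2} {ξ0 : E2} (hq0 : CollisionFree q0)
    (hsep : ∀ i, ξ0 ≠ q0 i) :
    ContDiffAt ℝ k (fun p : ℝ × ((Fin n → E2) × E2) => fullMap m S lam p.1 p.2.1 p.2.2)
      (ε, (q0, ξ0)) := by
  have hq : ContDiffAt ℝ k (fun p : ℝ × ((Fin n → E2) × E2) => p.2.1) (ε, (q0, ξ0)) :=
    contDiffAt_fst.comp _ contDiffAt_snd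
  have hξ : ContDiffAt ℝ k (fun p : ℝ × ((Fin n → E2) × E2) => p.2.2) (ε, (q0, ξ0)) :=
    contDiffAt_snd.comp _ contDiffAt_snd
  have hattraction : ContDiffAt ℝ k (fun p : ℝ × ((Fin n → E2) × E2) =>
      fun i => (p.1 / ‖p.2.2 - p.2.1 i‖ ^ 3) • (p.2.2 - p.2.1 i)) (ε, (q0, ξ0)) :=
    contDiffAt_pi.mpr fun i => contDiffAt_fst.div_norm_pow_three_smul
      (hξ.sub ((contDiff_apply ℝ E2 i).contDiffAt.comp _ hq)) (sub_ne_zero.mpr (hsep i))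
  exact (hattraction.add ((contDiffAt_nBodyMap m S lam hq0).comp _ hq)).prodMk
    ((contDiffAt_gradV m S lam hsep).comp (f := Prod.snd) _ contDiffAt_snd)

theorem fullMap_zero (q : Fin n → E2) (ξ : E2) :
    fullMap m S lam 0 q ξ = (nBodyMap m S lam q, gradV m S lam q ξ) := by
  simp only [fullMap, zero_div, zero_smul, zero_add]

theorem hasFDerivAt_fullMap_zero {q0 : Fin n → E2} {ξ0 : E2}
    {A : (Fin n → E2) →L[ℝ] (Fin n → E2)} {G : (Fin n → E2) × E2 →L[ℝ] E2}
    (hA : HasFDerivAt (nBodyMap m S lam) A q0)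
    (hG : HasFDerivAt (fun p : (Fin n → E2) × E2 => gradV m S lam p.1 p.2) G (q0, ξ0)) :
    HasFDerivAt (fun w : (Fin n → E2) × E2 => fullMap m S lam 0 w.1 w.2)
      ((A ∘L .fst ℝ _ _).prod G) (q0, ξ0) := by
  simp only [fullMap_zero]
  exact (hA.comp _ hasFDerivAt_fst).prodMk hG

end NBody

theorem stmt10_general {n : ℕ} (m : Fin n → ℝ)
    (sx sy : ℝ)
    (q0 : Fin n → E2) (hq0 : CollisionFree q0)
    (q01 : E2) (hsep : ∀ i, q01 ≠ q0 i)
    (lam : ℝ)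
    (h0 : ∀ i, nBodyMap m (Sdiag sx sy) lam q0 i = 0)
    (h1 : gradV m (Sdiag sx sy) lam q0 q01 = 0)
    (A : (Fin n → E2) →L[ℝ] (Fin n → E2))
    (hA : HasFDerivAt (fun q => nBodyMap m (Sdiag sx sy) lam q) A q0)
    (hAbij : Function.Bijective A)
    (B : E2 →L[ℝ] E2)
    (hB : HasFDerivAt (fun ξ => gradV m (Sdiag sx sy) lam q0 ξ) B q01)
    (hBbij : Function.Bijective B) :
    ∃ U : Set ℝ, IsOpen U ∧ (0 : ℝ) ∈ U ∧
      ∃ g : ℝ → (Fin n → E2) × E2, ContinuousOn g U ∧ g 0 = (q0, q01) ∧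
        ∀ ε ∈ U, fullMap m (Sdiag sx sy) lam ε (g ε).1 (g ε).2 = 0 := by
  set S := Sdiag sx sy
  set F := fun p : ℝ × ((Fin n → E2) × E2) => fullMap m S lam p.1 p.2.1 p.2.2
  have hF : ContDiffAt ℝ 1 F (0, (q0, q01)) := contDiffAt_fullMap m S lam hq0 hsep
  have hG := ((contDiffAt_gradV m S lam (k := 1) hsep).differentiableAt one_ne_zero).hasFDerivAt
  have hGB := (hG.comp q01 (hasFDerivAt_prodMk_right q0 q01)).unique hB
  have hpartial := ((hF.differentiableAt one_ne_zero).hasFDerivAt.comp (q0, q01)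
    (hasFDerivAt_prodMk_right 0 (q0, q01))).unique (hasFDerivAt_fullMap_zero m S lam hA hG)
  have hinv : (fderiv ℝ F (0, (q0, q01)) ∘L .inr ℝ ℝ ((Fin n → E2) × E2)).IsInvertible := by
    rw [hpartial]
    refine ContinuousLinearMap.isInvertible_of_bijective
      (LinearMap.bijective_prod_comp_fst hAbij ?_)
    rwa [← hGB] at hBbij
  obtain ⟨U, hU, h0U, g, hg, hg0, hgU⟩ :=
    (hF.hasStrictFDerivAt one_ne_zero).exists_continuousOn_apply_eq hinv
  refine ⟨U, hU, h0U, g, hg, hg0, fun ε hε => ?_⟩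
  calc fullMap m S lam ε (g ε).1 (g ε).2 = fullMap m S lam 0 q0 q01 := hgU ε hε
    _ = 0 := by rw [fullMap_zero, funext h0, h1]; rfl

/-- analytic continuation of a non-degenerate normalized balanced
configuration (σx ≠ σy) together with a non-degenerate critical point of the
restricted potential, to relative equilibria of the `(n+1)`-body problem for all
sufficiently small `(n+1)`-th masses. -/
theorem stmt10 {n : ℕ} (m : Fin n → ℝ) (hm : ∀ i, 0 < m i)
    (sx sy : ℝ) (hx : 0 < sx) (hy : 0 < sy) (hxy : sx ≠ sy)
    (q0 : Fin n → E2) (hq0 : CollisionFree q0)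
    (q01 : E2) (hsep : ∀ i, q01 ≠ q0 i)
    (lam : ℝ) (hlam : lam = newtU m q0)
    (hc : com m q0 = 0) (hI : momI m q0 (Sdiag sx sy) = 1)
    (h0 : ∀ i, nBodyMap m (Sdiag sx sy) lam q0 i = 0)
    (h1 : gradV m (Sdiag sx sy) lam q0 q01 = 0)
    (A : (Fin n → E2) →L[ℝ] (Fin n → E2))
    (hA : HasFDerivAt (fun q => nBodyMap m (Sdiag sx sy) lam q) A q0)
    (hAbij : Function.Bijective A)
    (B : E2 →L[ℝ] E2)
    (hB : HasFDerivAt (fun ξ => gradV m (Sdiag sx sy) lam q0 ξ) B q01)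
    (hBbij : Function.Bijective B) :
    ∃ U : Set ℝ, IsOpen U ∧ (0 : ℝ) ∈ U ∧
      ∃ g : ℝ → (Fin n → E2) × E2, ContinuousOn g U ∧ g 0 = (q0, q01) ∧
        ∀ ε ∈ U, fullMap m (Sdiag sx sy) lam ε (g ε).1 (g ε).2 = 0 :=
  stmt10_general m sx sy q0 hq0 q01 hsep lam h0 h1 A hA hAbij B hB hBbij
end
end

section
/- If q̃ is a normalized central configuration (S = σ I with σ > 0), then the vector v ∈ ℝ^{2n} tangent to the rotation orbit, given by v_i = J q̃_i where J is the rotation by π/2, lies in the kernel of the matrix H(q̃) = D²U_n(q̃) + λ Ŝ M with λ = U_n(m, q̃); in particular H(q̃) has rank at most 2n − 1. -/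
open scoped BigOperators RealInnerProductSpace
open Matrix Filter

noncomputable section

/-!
The map `hessMap` (whose derivative is `H(q̃)`) commutes with every linear isometry of the plane,
and it vanishes at a normalized central configuration. Hence it vanishes along the whole rotation
orbit `θ ↦ R_θ q̃`, and differentiating at `θ = 0` puts the orbit's tangent `J q̃` in the kernel
of `H(q̃)`. This tangent is nonzero because `q̃ ≠ 0` (its moment of inertia is `1`), so the
kernel is nontrivial and the rank is at most `2n - 1`.
-/

open Module

theorem LinearMap.finrank_range_lt_of_apply_eq_zero {K V W : Type*} [DivisionRing K]
    [AddCommGroup V] [Module K V] [AddCommGroup W] [Module K W] [FiniteDimensional K V]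
    (f : V →ₗ[K] W) {v : V} (hv : v ≠ 0) (hfv : f v = 0) :
    finrank K (LinearMap.range f) < finrank K V := by
  have hker : LinearMap.ker f ≠ ⊥ := fun h => hv <| by
    simpa [h] using LinearMap.mem_ker.mpr hfv
  have := Submodule.one_le_finrank_iff.mpr hker
  have := f.finrank_range_add_finrank_ker
  omega

theorem HasFDerivAt.apply_eq_zero_of_comp_eq {𝕜 E F : Type*} [NontriviallyNormedField 𝕜]
    [NormedAddCommGroup E] [NormedSpace 𝕜 E] [NormedAddCommGroup F] [NormedSpace 𝕜 F]
    {f : E → F} {f' : E →L[𝕜] F} {x : E} {γ : 𝕜 → E} {v : E} {t : 𝕜}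
    (hf : HasFDerivAt f f' x) (hγ : HasDerivAt γ v t) (hγt : γ t = x)
    (hconst : ∀ s, f (γ s) = f x) : f' v = 0 := by
  subst hγt
  have hcomp : HasDerivAt (f ∘ γ) (f' v) t := hf.comp_hasDerivAt t hγ
  rw [show f ∘ γ = fun _ => f (γ t) from funext hconst] at hcomp
  exact hcomp.unique (hasDerivAt_const t _)

theorem mvec_apply (S : Matrix (Fin 2) (Fin 2) ℝ) (x : E2) (k : Fin 2) :
    mvec S x k = S k 0 * x 0 + S k 1 * x 1 := by
  change S.mulVec (fun j => x j) k = _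
  simp [Matrix.mulVec, dotProduct, Fin.sum_univ_two]

theorem mvec_Sdiag_self (sg : ℝ) (x : E2) : mvec (Sdiag sg sg) x = sg • x := by
  ext k
  fin_cases k <;> simp [mvec_apply, Sdiag]

theorem rotJ_apply_zero (x : E2) : rotJ x 0 = -x 1 := by
  simp [rotJ, mvec_apply]

theorem rotJ_apply_one (x : E2) : rotJ x 1 = x 0 := by
  simp [rotJ, mvec_apply]

def planeRotation (θ : ℝ) : E2 →ₗᵢ[ℝ] E2 where
  toLinearMap := Real.cos θ • LinearMap.id + Real.sin θ • Matrix.toEuclideanLin !![0, -1; 1, 0]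
  norm_map' x := by
    change ‖Real.cos θ • x + Real.sin θ • rotJ x‖ = ‖x‖
    simp only [EuclideanSpace.norm_eq, Fin.sum_univ_two, Real.norm_eq_abs, sq_abs,
      PiLp.add_apply, PiLp.smul_apply, smul_eq_mul, rotJ_apply_zero, rotJ_apply_one]
    congr 1
    linear_combination (x 0 ^ 2 + x 1 ^ 2) * Real.sin_sq_add_cos_sq θ

theorem planeRotation_apply (θ : ℝ) (x : E2) :
    planeRotation θ x = Real.cos θ • x + Real.sin θ • rotJ x := rfl

@[simp] theorem planeRotation_zero_apply (x : E2) : planeRotation 0 x = x := by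
  simp [planeRotation_apply]

@[simp] theorem norm_rotJ (x : E2) : ‖rotJ x‖ = ‖x‖ := by
  have h : planeRotation (Real.pi / 2) x = rotJ x := by simp [planeRotation_apply]
  rw [← h, LinearIsometry.norm_map]

theorem hasDerivAt_planeRotation_apply (x : E2) :
    HasDerivAt (fun θ => planeRotation θ x) (rotJ x) 0 := by
  have h := ((Real.hasDerivAt_cos 0).smul_const x).fun_add
    ((Real.hasDerivAt_sin 0).smul_const (rotJ x))
  simp only [Real.sin_zero, Real.cos_zero, neg_zero, zero_smul, one_smul, zero_add] at h
  exact h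

theorem gradU_comp_linearIsometry {n : ℕ} (R : E2 →ₗᵢ[ℝ] E2) (m : Fin n → ℝ) (q : Fin n → E2)
    (i : Fin n) : gradU m (fun j => R (q j)) i = R (gradU m q i) := by
  simp only [gradU, map_sum, map_smul, ← map_sub, LinearIsometry.norm_map]

theorem hessMap_comp_linearIsometry {n : ℕ} (R : E2 →ₗᵢ[ℝ] E2) (m : Fin n → ℝ) (sg lam : ℝ)
    (q : Fin n → E2) (i : Fin n) :
    hessMap m sg lam (fun j => R (q j)) i = R (hessMap m sg lam q i) := by
  simp only [hessMap, gradU_comp_linearIsometry, map_add, map_smul]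

theorem hessMap_eq_zero_of_isBC {n : ℕ} {m : Fin n → ℝ} {sg lam : ℝ} {q : Fin n → E2}
    (hc : com m q = 0) (hbc : IsBC m q (Sdiag sg sg) lam) : hessMap m sg lam q = 0 := by
  funext i
  have h := hbc i
  rw [hc, sub_zero, mvec_Sdiag_self, smul_smul] at h
  rw [Pi.zero_apply, hessMap, ← h]
  ring_nf

@[simp] theorem momI_zero {n : ℕ} (m : Fin n → ℝ) (S : Matrix (Fin 2) (Fin 2) ℝ) :
    momI m 0 S = 0 := by
  simp [momI, com]

theorem finrank_config (n : ℕ) : finrank ℝ (Fin n → E2) = 2 * n := by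
  simp [Module.finrank_pi_fintype, mul_comm]

theorem stmt12_general {n : ℕ} (m : Fin n → ℝ)
    (sg : ℝ)
    (q : Fin n → E2)
    (hc : com m q = 0) (hI : momI m q (Sdiag sg sg) = 1)
    (lam : ℝ)
    (hcc : IsBC m q (Sdiag sg sg) lam)
    (H : (Fin n → E2) →L[ℝ] (Fin n → E2))
    (hH : HasFDerivAt (fun p => hessMap m sg lam p) H q) :
    H (fun i => rotJ (q i)) = 0 ∧
      Module.finrank ℝ (LinearMap.range H.toLinearMap) ≤ 2 * n - 1 := by
  have hzero := hessMap_eq_zero_of_isBC hc hcc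
  have horbit : HasDerivAt (fun θ i => planeRotation θ (q i)) (fun i => rotJ (q i)) 0 :=
    hasDerivAt_pi.mpr fun i => hasDerivAt_planeRotation_apply (q i)
  have hkernel : H (fun i => rotJ (q i)) = 0 := by
    refine hH.apply_eq_zero_of_comp_eq horbit (funext fun i => planeRotation_zero_apply (q i))
      fun θ => funext fun i => ?_
    rw [hessMap_comp_linearIsometry, hzero, Pi.zero_apply, map_zero]
  have hq : q ≠ 0 := by
    rintro rfl
    simp at hI
  have hv : (fun i => rotJ (q i)) ≠ 0 := fun h => hq <| funext fun i => by
    simpa using congrArg (‖·‖) (congrFun h i)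
  have hrank := H.toLinearMap.finrank_range_lt_of_apply_eq_zero hv hkernel
  rw [finrank_config] at hrank
  exact ⟨hkernel, by omega⟩

/-- the rotational direction lies in the kernel of `H(q̃)`, so
`H(q̃)` has rank at most `2n − 1`. -/
theorem stmt12 {n : ℕ} (hn : 1 ≤ n) (m : Fin n → ℝ) (hm : ∀ i, 0 < m i)
    (sg : ℝ) (hsg : 0 < sg)
    (q : Fin n → E2) (hq : CollisionFree q)
    (hc : com m q = 0) (hI : momI m q (Sdiag sg sg) = 1)
    (lam : ℝ) (hlam : lam = newtU m q)
    (hcc : IsBC m q (Sdiag sg sg) lam)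
    (H : (Fin n → E2) →L[ℝ] (Fin n → E2))
    (hH : HasFDerivAt (fun p => hessMap m sg lam p) H q) :
    H (fun i => rotJ (q i)) = 0 ∧
      Module.finrank ℝ (LinearMap.range H.toLinearMap) ≤ 2 * n - 1 :=
  stmt12_general m sg q hc hI lam hcc H hH
end
end
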